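/- arXiv:2005.01477 — 3 statements merged into one kernel-verified Lean document; each statement's English description precedes it below -/
import Mathlib

section
/- Let A be a skew-symmetric endomorphism of a 4-dimensional real inner product space with rank(A) = 2, and let η be a vector with Aη ≠ 0. Then A, viewed as the 2-form (X,Y) ↦ ⟨AX,Y⟩, equals (1/|Aη|²)·(Aη)^♭ ∧ (A²η)^♭. -/
/-!
Put `u = Aη`. Skew-symmetry makes `u ⊥ Au` and `Au ≠ 0`, so the rank-two hypothesis forces
`range A = span {u, Au}`. Pairing `AX = m u + n Au` with `u` and `Au` and using skew-symmetry
once more (together with `‖u‖² A²u = -‖Au‖² u`) determines the coefficients: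
`‖u‖² AX = -⟪Au, X⟫ u + ⟪u, X⟫ Au`. Taking the inner product with `Y` gives the formula.
-/

open scoped RealInnerProductSpace

namespace LinearMap

variable {V : Type*} [NormedAddCommGroup V] [InnerProductSpace ℝ V] {A : V →ₗ[ℝ] V}

theorem inner_apply_self_eq_zero_of_skew (hA : ∀ X Y : V, ⟪A X, Y⟫ = -⟪X, A Y⟫) (x : V) :
    ⟪A x, x⟫ = 0 := by
  linarith [hA x x, real_inner_comm x (A x)]

theorem norm_sq_smul_apply_apply_eq_of_skew (hA : ∀ X Y : V, ⟪A X, Y⟫ = -⟪X, A Y⟫) {u : V}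
    (hspan : A (A u) ∈ Submodule.span ℝ {u, A u}) :
    ‖u‖ ^ 2 • A (A u) = -(‖A u‖ ^ 2 • u) := by
  obtain ⟨p, q, hpq⟩ := Submodule.mem_span_pair.mp hspan
  have horth : ⟪A u, u⟫ = 0 := inner_apply_self_eq_zero_of_skew hA u
  have hq : q * ‖A u‖ ^ 2 = 0 := by
    have h := inner_apply_self_eq_zero_of_skew hA (A u)
    rw [← hpq, inner_add_left, real_inner_smul_left, real_inner_smul_left,
      real_inner_comm (A u), horth, real_inner_self_eq_norm_sq] at h
    linarith
  have hp : p * ‖u‖ ^ 2 = -‖A u‖ ^ 2 := by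
    have h := hA (A u) u
    rw [← hpq, inner_add_left, real_inner_smul_left, real_inner_smul_left, horth,
      real_inner_self_eq_norm_sq, real_inner_self_eq_norm_sq] at h
    linarith
  have hqAu : q • A u = 0 := smul_eq_zero.mpr (by simpa using hq)
  rw [← hpq, hqAu, add_zero, smul_smul, mul_comm, hp, neg_smul]

theorem norm_sq_smul_apply_eq_of_skew (hA : ∀ X Y : V, ⟪A X, Y⟫ = -⟪X, A Y⟫) {u : V}
    (hrange : range A ≤ Submodule.span ℝ {u, A u}) (X : V) :
    ‖u‖ ^ 2 • A X = ⟪u, X⟫ • A u - ⟪A u, X⟫ • u := by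
  obtain ⟨m, n, hmn⟩ := Submodule.mem_span_pair.mp (hrange (mem_range_self A X))
  have hA2u := norm_sq_smul_apply_apply_eq_of_skew hA (hrange (mem_range_self A (A u)))
  have horth : ⟪A u, u⟫ = 0 := inner_apply_self_eq_zero_of_skew hA u
  have hm : m * ‖u‖ ^ 2 = -⟪A u, X⟫ := by
    have h := hA X u
    rw [← hmn, inner_add_left, real_inner_smul_left, real_inner_smul_left, horth,
      real_inner_self_eq_norm_sq, real_inner_comm] at h
    linarith
  have hn : ‖A u‖ ^ 2 * (n * ‖u‖ ^ 2 - ⟪u, X⟫) = 0 := by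
    have h := hA X (A u)
    have h' := congrArg (⟪X, ·⟫) hA2u
    simp only [inner_smul_right, inner_neg_right] at h'
    rw [← hmn, inner_add_left, real_inner_smul_left, real_inner_smul_left,
      real_inner_comm (A u), horth, real_inner_self_eq_norm_sq] at h
    rw [real_inner_comm u X] at h'
    linear_combination ‖u‖ ^ 2 * h - h'
  have hnAu : (n * ‖u‖ ^ 2) • A u = ⟪u, X⟫ • A u := by
    rw [← sub_eq_zero, ← sub_smul, smul_eq_zero, or_comm]
    simpa using hn
  rw [← hmn, smul_add, smul_smul, smul_smul, mul_comm _ m, mul_comm _ n, hm, hnAu, neg_smul,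
    add_comm, sub_eq_add_neg]

theorem range_eq_span_pair_of_finrank_range_eq_two (hA : ∀ X Y : V, ⟪A X, Y⟫ = -⟪X, A Y⟫)
    (hrank : Module.finrank ℝ (range A) = 2) {η : V} (hη : A η ≠ 0) :
    range A = Submodule.span ℝ {A η, A (A η)} := by
  have hA2η : A (A η) ≠ 0 := by
    intro h
    have h' := hA η (A η)
    rw [h, inner_zero_right, neg_zero] at h'
    exact hη (inner_self_eq_zero.mp h')
  have hli : LinearIndependent ℝ ![A η, A (A η)] := by
    refine linearIndependent_of_ne_zero_of_inner_eq_zero (fun i => by fin_cases i <;> simpa) ?_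
    intro i j hij
    fin_cases i <;> fin_cases j
    · exact absurd rfl hij
    · exact (real_inner_comm _ _).trans (inner_apply_self_eq_zero_of_skew hA (A η))
    · exact inner_apply_self_eq_zero_of_skew hA (A η)
    · exact absurd rfl hij
  have : FiniteDimensional ℝ (range A) := Module.finite_of_finrank_eq_succ hrank
  refine (Submodule.eq_of_le_of_finrank_le ?_ ?_).symm
  · rw [Submodule.span_le]
    rintro x (rfl | rfl)
    exacts [mem_range_self A η, mem_range_self A (A η)]
  · rw [hrank, ← Matrix.range_cons_cons_empty _ _ ![], finrank_span_eq_card hli]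
    simp

end LinearMap

theorem stmt2_general {V : Type*} [NormedAddCommGroup V] [InnerProductSpace ℝ V]
    (A : V →ₗ[ℝ] V) (hA : ∀ X Y : V, ⟪A X, Y⟫ = -⟪X, A Y⟫)
    (hrank : Module.finrank ℝ (LinearMap.range A) = 2)
    (η : V) (hη : A η ≠ 0) (X Y : V) :
    ⟪A X, Y⟫ =
      (1 / ‖A η‖^2) * (⟪A η, X⟫ * ⟪A (A η), Y⟫ - ⟪A η, Y⟫ * ⟪A (A η), X⟫) := by
  have hrange := (LinearMap.range_eq_span_pair_of_finrank_range_eq_two hA hrank hη).le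
  have h := congrArg (⟪·, Y⟫) (LinearMap.norm_sq_smul_apply_eq_of_skew hA hrange X)
  simp only [inner_sub_left, real_inner_smul_left] at h
  have hnorm : ‖A η‖ ^ 2 ≠ 0 := pow_ne_zero 2 (norm_ne_zero_iff.mpr hη)
  field_simp
  linear_combination h

/-- A rank-two skew-symmetric endomorphism `A` of a 4-dimensional real inner product
space with `Aη ≠ 0`, viewed as the 2-form `(X,Y) ↦ ⟨AX,Y⟩`, equals
`(1/|Aη|²)·(Aη)^♭ ∧ (A²η)^♭`. -/
theorem stmt2 {V : Type*} [NormedAddCommGroup V] [InnerProductSpace ℝ V]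
    [FiniteDimensional ℝ V] (h4 : Module.finrank ℝ V = 4)
    (A : V →ₗ[ℝ] V) (hA : ∀ X Y : V, ⟪A X, Y⟫ = -⟪X, A Y⟫)
    (hrank : Module.finrank ℝ (LinearMap.range A) = 2)
    (η : V) (hη : A η ≠ 0) (X Y : V) :
    ⟪A X, Y⟫ =
      (1 / ‖A η‖^2) * (⟪A η, X⟫ * ⟪A (A η), Y⟫ - ⟪A η, Y⟫ * ⟪A (A η), X⟫) :=
  stmt2_general A hA hrank η hη X Y
end

section
/- Let A be a skew-symmetric endomorphism of rank two of a 4-dimensional real inner product space, and η a vector with Aη ≠ 0. Then A³η = −(|A²η|²/|Aη|²)·Aη. -/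
/-!
Put `u = Aη` and `v = A²η`. Skew-symmetry gives `⟪x, Ax⟫ = 0` and `⟪x, A²x⟫ = -‖Ax‖²`, so `u ⊥ v`
and `v ≠ 0`. Hence `u, v` span the two-dimensional range of `A`, which contains `A³η = Av`.
In this orthogonal basis the `v`-coefficient of `Av` is `⟪v, Av⟫ / ‖v‖² = 0` and the
`u`-coefficient is `⟪u, A²u⟫ / ‖u‖² = -‖v‖² / ‖u‖²`.
-/

open scoped RealInnerProductSpace

open Module Submodule

section InnerProductSpace

variable {E : Type*} [NormedAddCommGroup E] [InnerProductSpace ℝ E]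

theorem eq_smul_add_smul_of_mem_span_pair_of_inner_eq_zero {u v x : E} (huv : ⟪u, v⟫ = 0)
    (hx : x ∈ span ℝ {u, v}) :
    x = (⟪u, x⟫ / ‖u‖ ^ 2) • u + (⟪v, x⟫ / ‖v‖ ^ 2) • v := by
  obtain ⟨a, b, rfl⟩ := mem_span_pair.mp hx
  have hvu : ⟪v, u⟫ = 0 := by rwa [real_inner_comm]
  have coeff {w : E} {c : ℝ} : (c * ‖w‖ ^ 2 / ‖w‖ ^ 2) • w = c • w := by
    rcases eq_or_ne w 0 with rfl | hw
    · simp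
    · rw [mul_div_cancel_right₀ _ (by positivity)]
  simp only [inner_add_right, real_inner_smul_right, real_inner_self_eq_norm_sq, huv, hvu,
    mul_zero, add_zero, zero_add, coeff]

theorem span_pair_eq_of_inner_eq_zero {W : Submodule ℝ E} (hW : finrank ℝ W = 2) {u v : E}
    (hu : u ∈ W) (hv : v ∈ W) (hu0 : u ≠ 0) (hv0 : v ≠ 0) (huv : ⟪u, v⟫ = 0) :
    span ℝ {u, v} = W := by
  have : FiniteDimensional ℝ W := Module.finite_of_finrank_eq_succ hW
  have hli : LinearIndependent ℝ ![u, v] := by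
    refine linearIndependent_of_ne_zero_of_inner_eq_zero (fun i => ?_) fun i j hij => ?_
    · fin_cases i <;> assumption
    · fin_cases i <;> fin_cases j <;> simp_all [real_inner_comm]
  refine eq_of_le_of_finrank_eq (span_le.mpr (Set.insert_subset hu (by simpa))) ?_
  rw [hW, ← Matrix.range_cons_cons_empty u v ![], finrank_span_eq_card hli, Fintype.card_fin]

section Skew

variable {A : E →ₗ[ℝ] E} (hA : ∀ x y : E, ⟪A x, y⟫ = -⟪x, A y⟫)
include hA

theorem inner_apply_eq_zero_of_skew (x : E) : ⟪x, A x⟫ = 0 := by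
  have := hA x x
  rw [real_inner_comm] at this
  linarith

theorem inner_apply_apply_of_skew (x : E) : ⟪x, A (A x)⟫ = -‖A x‖ ^ 2 := by
  rw [← real_inner_self_eq_norm_sq, hA, neg_neg]

end Skew

end InnerProductSpace

theorem stmt3_general {V : Type*} [NormedAddCommGroup V] [InnerProductSpace ℝ V]
    (A : V →ₗ[ℝ] V) (hA : ∀ X Y : V, ⟪A X, Y⟫ = -⟪X, A Y⟫)
    (hrank : Module.finrank ℝ (LinearMap.range A) = 2)
    (η : V) (hη : A η ≠ 0) :
    A (A (A η)) = -(‖A (A η)‖^2 / ‖A η‖^2) • A η := by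
  set u := A η
  set v := A u
  have hv : v ≠ 0 := by
    intro hv
    have h : ⟪η, v⟫ = -‖u‖ ^ 2 := inner_apply_apply_of_skew hA η
    rw [hv, inner_zero_right, zero_eq_neg, sq_eq_zero_iff, norm_eq_zero] at h
    exact hη h
  have huv : ⟪u, v⟫ = 0 := inner_apply_eq_zero_of_skew hA u
  have hspan : span ℝ {u, v} = LinearMap.range A :=
    span_pair_eq_of_inner_eq_zero hrank ⟨η, rfl⟩ ⟨u, rfl⟩ hη hv huv
  have hAv : A v ∈ span ℝ {u, v} := hspan ▸ LinearMap.mem_range_self A v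
  rw [eq_smul_add_smul_of_mem_span_pair_of_inner_eq_zero huv hAv,
    inner_apply_apply_of_skew hA u, inner_apply_eq_zero_of_skew hA v]
  simp [v, neg_div]

/-- For a rank-two skew-symmetric endomorphism `A` of a 4-dimensional real inner
product space and `η` with `Aη ≠ 0`, one has `A³η = -(|A²η|²/|Aη|²)·Aη`. -/
theorem stmt3 {V : Type*} [NormedAddCommGroup V] [InnerProductSpace ℝ V]
    [FiniteDimensional ℝ V] (h4 : Module.finrank ℝ V = 4)
    (A : V →ₗ[ℝ] V) (hA : ∀ X Y : V, ⟪A X, Y⟫ = -⟪X, A Y⟫)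
    (hrank : Module.finrank ℝ (LinearMap.range A) = 2)
    (η : V) (hη : A η ≠ 0) :
    A (A (A η)) = -(‖A (A η)‖^2 / ‖A η‖^2) • A η :=
  stmt3_general A hA hrank η hη
end

section
/- Let A be a skew-symmetric endomorphism of rank two of a finite-dimensional real inner product space. Then the squared Frobenius norm of A² equals half the square of the squared Frobenius norm of A, i.e. |A²|² = (|A|²)²/2, where |B|² = Σ_j |B e_j|² for any orthonormal basis (e_j). -/
/-!
Let `u, v` be an orthonormal basis of the plane `range A`. Skew-symmetry forces `A u = β v` and
`A v = -β u`, so `A² = -β²` on that plane. For any `B` with range in the plane and a map `C` with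
`⟪B x, y⟫ = ⟪x, C y⟫`, Parseval gives `|B|² = ‖C u‖² + ‖C v‖²`. Applied to `B = A, C = -A` and to
`B = C = A²` this yields `|A|² = 2β²` and `|A²|² = 2β⁴`.
-/

open scoped RealInnerProductSpace

section

variable {V : Type*} [NormedAddCommGroup V] [InnerProductSpace ℝ V]

theorem OrthonormalBasis.sum_norm_sq_apply_eq_of_apply_mem {ι κ : Type*} [Fintype ι] [Fintype κ]
    (b : OrthonormalBasis ι ℝ V) {W : Submodule ℝ V} (e : OrthonormalBasis κ ℝ W)
    {B C : V →ₗ[ℝ] V} (hBW : ∀ x, B x ∈ W) (hBC : ∀ x y, ⟪B x, y⟫ = ⟪x, C y⟫) :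
    ∑ j, ‖B (b j)‖ ^ 2 = ∑ i, ‖C (e i)‖ ^ 2 := by
  have hnorm (x : V) : ‖B x‖ ^ 2 = ∑ i, ⟪x, C (e i)⟫ ^ 2 := by
    rw [← Submodule.coe_norm (⟨B x, hBW x⟩ : W), ← e.sum_sq_inner_right]
    simp only [Submodule.coe_inner, real_inner_comm (B x), hBC]
  simp only [hnorm]
  rw [Finset.sum_comm]
  exact Finset.sum_congr rfl fun i _ => b.sum_sq_inner_right _

theorem Submodule.eq_inner_smul_add_inner_smul {W : Submodule ℝ V}
    (e : OrthonormalBasis (Fin 2) ℝ W) {x : V} (hx : x ∈ W) :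
    x = ⟪(e 0 : V), x⟫ • (e 0 : V) + ⟪(e 1 : V), x⟫ • (e 1 : V) := by
  simpa [Fin.sum_univ_two, Submodule.coe_inner] using
    (congrArg Subtype.val (e.sum_repr' ⟨x, hx⟩)).symm

variable {A : V →ₗ[ℝ] V}

theorem inner_self_apply_eq_zero_of_skew (hA : ∀ x y : V, ⟪A x, y⟫ = -⟪x, A y⟫) (x : V) :
    ⟪x, A x⟫ = 0 := by
  have := hA x x
  rw [real_inner_comm] at this
  linarith

theorem apply_orthonormalBasis_range_of_skew (hA : ∀ x y : V, ⟪A x, y⟫ = -⟪x, A y⟫)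
    (e : OrthonormalBasis (Fin 2) ℝ (LinearMap.range A)) :
    A (e 0) = ⟪(e 1 : V), A (e 0)⟫ • (e 1 : V) ∧
      A (e 1) = -⟪(e 1 : V), A (e 0)⟫ • (e 0 : V) := by
  have hdecomp (x : V) := Submodule.eq_inner_smul_add_inner_smul e (LinearMap.mem_range_self A x)
  constructor
  · conv_lhs => rw [hdecomp, inner_self_apply_eq_zero_of_skew hA]
    simp
  · conv_lhs => rw [hdecomp, inner_self_apply_eq_zero_of_skew hA, real_inner_comm, hA]
    simp

end

/-- For a rank-two skew-symmetric endomorphism `A` of a finite-dimensional real inner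
product space, the squared Frobenius norm of `A²` equals half the square of the squared
Frobenius norm of `A`: `|A²|² = (|A|²)²/2`, where `|B|² = ∑_j |B e_j|²` for any
orthonormal basis `(e_j)`. -/
theorem stmt4 {V : Type*} [NormedAddCommGroup V] [InnerProductSpace ℝ V]
    [FiniteDimensional ℝ V] {n : ℕ} (b : OrthonormalBasis (Fin n) ℝ V)
    (A : V →ₗ[ℝ] V) (hA : ∀ X Y : V, ⟪A X, Y⟫ = -⟪X, A Y⟫)
    (hrank : Module.finrank ℝ (LinearMap.range A) = 2) :
    ∑ j : Fin n, ‖A (A (b j))‖^2 = (∑ j : Fin n, ‖A (b j)‖^2)^2 / 2 := by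
  let e := (stdOrthonormalBasis ℝ (LinearMap.range A)).reindex (finCongr hrank)
  obtain ⟨hAu, hAv⟩ := apply_orthonormalBasis_range_of_skew hA e
  set β := ⟪(e 1 : V), A (e 0)⟫
  have hnorm (i : Fin 2) : ‖(e i : V)‖ = 1 := e.orthonormal.1 i
  have hA1 : ∑ j, ‖A (b j)‖ ^ 2 = 2 * β ^ 2 := by
    rw [b.sum_norm_sq_apply_eq_of_apply_mem e (C := -A) (LinearMap.mem_range_self A)
      (fun x y => by simp [hA])]
    simp only [LinearMap.neg_apply, norm_neg, Fin.sum_univ_two, hAu, hAv, neg_smul, norm_smul,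
      Real.norm_eq_abs, hnorm, mul_one, sq_abs]
    ring
  have hA2 : ∑ j, ‖A (A (b j))‖ ^ 2 = 2 * β ^ 4 := by
    refine (b.sum_norm_sq_apply_eq_of_apply_mem e (B := A ∘ₗ A) (C := A ∘ₗ A)
      (fun x => LinearMap.mem_range_self A _) (fun x y => by simp [hA])).trans ?_
    simp only [LinearMap.comp_apply, Fin.sum_univ_two, hAu, hAv, map_smul, map_neg, neg_smul,
      smul_neg, norm_neg, norm_smul, Real.norm_eq_abs, hnorm, mul_one, abs_mul_abs_self]
    ring
  rw [hA1, hA2]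
  ring
end
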